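/- arXiv:1501.05225 — 7 statements merged into one kernel-verified Lean document; each statement's English description precedes it below -/
import Mathlib

section
/- The FastLSU iterate sequence is nonincreasing: for the sequence defined by r_0 = m and r_{k+1} = #S(r_k·α/m), one has r_{k+1} ≤ r_k for every k ≥ 0. -/
open scoped Classical

/-- `#S(t)`: the number of elements of the multiset `C` that are strictly less than `t`. -/
noncomputable def countBelow (C : Multiset ℝ) (t : ℝ) : ℕ :=
  (C.filter (fun p => p < t)).card

/-- The `k`-th smallest element (1-indexed order statistic, with multiplicity) of `D`. -/
noncomputable def orderStat (D : Multiset ℝ) (k : ℕ) : ℝ :=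
  (D.sort (· ≤ ·)).getD (k - 1) 0

/-- The Benjamini–Hochberg index at level `α`:
`max {i ∈ {1,…,m} : p_(i) < i·α/m}`, with value `0` if this set is empty. -/
noncomputable def rBH (α : ℝ) (C : Multiset ℝ) : ℕ :=
  ((Finset.Icc 1 C.card).filter
    (fun i => orderStat C i < (i : ℝ) * α / (C.card : ℝ))).sup id

/-- The FastLSU iterate sequence is nonincreasing: for the sequence defined by
`r 0 = m` and `r (k+1) = #S(r k · α / m)`, one has `r (k+1) ≤ r k` for every `k ≥ 0`. -/
theorem fastLSU_nonincreasing
    (α : ℝ) (hα0 : 0 < α) (hα1 : α < 1)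
    (C : Multiset ℝ) (hC : ∀ p ∈ C, 0 ≤ p ∧ p ≤ 1)
    (m : ℕ) (hm : m = C.card)
    (r : ℕ → ℕ) (hr0 : r 0 = m)
    (hr : ∀ k, r (k + 1) = countBelow C ((r k : ℝ) * α / (m : ℝ))) :
    ∀ k, r (k + 1) ≤ r k := by
  have hmono : ∀ s t : ℝ, s ≤ t → countBelow C s ≤ countBelow C t := by
    intro s t hst
    unfold countBelow
    exact Multiset.card_le_card (Multiset.monotone_filter_right _ (fun p hp => lt_of_lt_of_le hp hst))
  intro k
  induction k with
  | zero =>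
    rw [hr 0, hr0]
    calc countBelow C ((m : ℝ) * α / m) ≤ C.card := Multiset.card_le_card (Multiset.filter_le _ _)
    _ = m := hm.symm
  | succ n ih =>
    calc r (n+2) = countBelow C ((r (n+1) : ℝ) * α / m) := hr (n+1)
    _ ≤ countBelow C ((r n : ℝ) * α / m) := by
        apply hmono; gcongr
    _ = r (n+1) := (hr n).symm
end

section
/- The Benjamini–Hochberg index is a lower bound for every FastLSU iterate: with r_BH = max{i ∈ {1,…,m} : p_(i) < i·α/m} (and r_BH = 0 if this set is empty), the sequence defined by r_0 = m and r_{k+1} = #S(r_k·α/m) satisfies r_BH ≤ r_k for every k ≥ 0. -/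
open scoped Classical

lemma le_countBelow (C : Multiset ℝ) (j : ℕ) (t : ℝ)
    (hj1 : 1 ≤ j) (hjm : j ≤ C.card) (ht : orderStat C j < t) :
    j ≤ countBelow C t := by
  set L := C.sort (· ≤ ·) with hL
  have hlen : L.length = C.card := C.length_sort _
  have hsorted : L.Pairwise (· ≤ ·) := C.pairwise_sort _
  have hCL : C = (L : Multiset ℝ) := (C.sort_eq _).symm
  have hcb : countBelow C t = (L.filter (fun p => decide (p < t))).length := by
    rw [countBelow, hCL]
    simp [Multiset.filter_coe]
  have hidx : j - 1 < L.length := by omega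
  have hget : orderStat C j = L.get ⟨j - 1, hidx⟩ := by
    rw [orderStat, ← hL, List.getD_eq_getElem _ _ hidx]
    simp
  -- every element of L.take j is < t
  have htake : ∀ x ∈ L.take j, x < t := by
    intro x hx
    rw [List.mem_take_iff_getElem] at hx
    obtain ⟨i, hi, rfl⟩ := hx
    have hi' : i < j := lt_of_lt_of_le hi (min_le_left _ _)
    have hiL : i < L.length := by omega
    have hle : L.get ⟨i, hiL⟩ ≤ L.get ⟨j - 1, hidx⟩ := by
      apply hsorted.rel_get_of_le
      simp only [Fin.mk_le_mk]
      omega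
    calc L[i] = L.get ⟨i, hiL⟩ := rfl
      _ ≤ L.get ⟨j - 1, hidx⟩ := hle
      _ = orderStat C j := hget.symm
      _ < t := ht
  have hfiltake : (L.take j).filter (fun p => decide (p < t)) = L.take j := by
    apply List.filter_eq_self.mpr
    intro x hx
    simpa using htake x hx
  have hsub : ((L.take j).filter (fun p => decide (p < t))).Sublist
      (L.filter (fun p => decide (p < t))) :=
    (List.take_sublist j L).filter _
  have := hsub.length_le
  rw [hfiltake, List.length_take] at this
  rw [hcb]
  omega

lemma rBH_le_card (α : ℝ) (C : Multiset ℝ) : rBH α C ≤ C.card := by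
  apply Finset.sup_le
  intro i hi
  simp only [Finset.mem_filter, Finset.mem_Icc] at hi
  exact hi.1.2

/-- The Benjamini–Hochberg index is a lower bound for every FastLSU iterate:
with `r_BH = max{i ∈ {1,…,m} : p_(i) < i·α/m}` (and `0` if this set is empty), the sequence
defined by `r 0 = m` and `r (k+1) = #S(r k · α / m)` satisfies `r_BH ≤ r k` for every `k`. -/
theorem rBH_le_fastLSU_iterates
    (α : ℝ) (hα0 : 0 < α) (hα1 : α < 1)
    (C : Multiset ℝ) (hC : ∀ p ∈ C, 0 ≤ p ∧ p ≤ 1)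
    (m : ℕ) (hm : m = C.card)
    (r : ℕ → ℕ) (hr0 : r 0 = m)
    (hr : ∀ k, r (k + 1) = countBelow C ((r k : ℝ) * α / (m : ℝ))) :
    ∀ k, rBH α C ≤ r k := by
  intro k
  induction k with
  | zero => rw [hr0, hm]; exact rBH_le_card α C
  | succ k ih =>
    set j := rBH α C with hj
    rcases Nat.eq_zero_or_pos j with h0 | hpos
    · omega
    · -- the sup is attained
      have hne : (((Finset.Icc 1 C.card).filter
          (fun i => orderStat C i < (i : ℝ) * α / (C.card : ℝ)))).Nonempty := by
        by_contra h
        rw [Finset.not_nonempty_iff_eq_empty] at h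
        have : j = 0 := by rw [hj, rBH, h]; simp
        omega
      obtain ⟨b, hb, hbeq⟩ := Finset.exists_mem_eq_sup _ hne id
      have hjb : j = b := hbeq
      simp only [Finset.mem_filter, Finset.mem_Icc] at hb
      obtain ⟨⟨hb1, hbm⟩, hblt⟩ := hb
      have hm0 : 0 < C.card := lt_of_lt_of_le hb1 hbm
      have hjm : j ≤ C.card := hjb ▸ hbm
      have hj1 : 1 ≤ j := hpos
      -- orderStat C j < j α / m ≤ (r k) α / m
      have hstep : orderStat C j < (r k : ℝ) * α / (m : ℝ) := by
        rw [hjb]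
        refine lt_of_lt_of_le hblt ?_
        rw [hm]
        have hbrk : (b:ℝ) ≤ (r k : ℝ) := by exact_mod_cast (hjb ▸ ih : b ≤ r k)
        gcongr
      rw [hr k]
      exact le_countBelow C j _ hj1 hjm hstep
end

section
/- The two argmax characterizations of the BH procedure coincide: max{i ∈ {0,1,…,m} : i = #S(i·α/m)} = r_BH, where the left-hand maximum is well defined because i = 0 always satisfies 0 = #S(0). -/
open scoped Classical

theorem List.Pairwise.getElem_lt_iff_lt_countP {α : Type*} [LinearOrder α] {l : List α}
    (hl : l.Pairwise (· ≤ ·)) (t : α) {j : ℕ} (hj : j < l.length) :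
    l[j] < t ↔ j < l.countP (· < t) := by
  induction l generalizing j with
  | nil => simp at hj
  | cons a l ih =>
    obtain ⟨ha, hl⟩ := List.pairwise_cons.mp hl
    by_cases hat : a < t
    · rcases j with _ | j
      · simp [hat]
      · simpa [hat] using ih hl (j := j) (by simpa using hj)
    · -- the head is minimal, so no entry of the list lies below `t`
      have hge : ∀ b ∈ a :: l, t ≤ b := by
        simpa using ⟨not_lt.mp hat, fun b hb => (not_lt.mp hat).trans (ha b hb)⟩
      rw [List.countP_eq_zero.mpr fun b hb => by simpa using hge b hb]
      simpa using hge _ (List.getElem_mem hj)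

theorem orderStat_lt_iff_le_countBelow (C : Multiset ℝ) (t : ℝ) {i : ℕ} (hi : 1 ≤ i)
    (hiC : i ≤ C.card) : orderStat C i < t ↔ i ≤ countBelow C t := by
  have hlen : i - 1 < (C.sort (· ≤ ·)).length := by rw [Multiset.length_sort]; omega
  have hcount : countBelow C t = (C.sort (· ≤ ·)).countP (· < t) := by
    rw [countBelow, ← Multiset.countP_eq_card_filter, ← Multiset.coe_countP, Multiset.sort_eq]
  rw [orderStat, List.getD_eq_getElem _ _ hlen,
    (Multiset.pairwise_sort C _).getElem_lt_iff_lt_countP t hlen, hcount]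
  omega

theorem countBelow_mono (C : Multiset ℝ) : Monotone (countBelow C) := fun _ _ hst =>
  Multiset.card_le_card <| Multiset.monotone_filter_right C fun _ hp => hp.trans_le hst

theorem countBelow_le_card (C : Multiset ℝ) (t : ℝ) : countBelow C t ≤ C.card :=
  Multiset.card_le_card (Multiset.filter_le _ C)

theorem rBH_eq_sup_filter_le_countBelow (α : ℝ) (C : Multiset ℝ) :
    rBH α C = ((Finset.Icc 1 C.card).filter
      (fun i : ℕ => i ≤ countBelow C ((i : ℝ) * α / (C.card : ℝ)))).sup id := by
  unfold rBH
  congr 1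
  refine Finset.filter_congr fun i hi => ?_
  obtain ⟨hi1, hiC⟩ := Finset.mem_Icc.mp hi
  exact orderStat_lt_iff_le_countBelow C _ hi1 hiC

theorem Nat.sup_filter_eq_apply_eq_sup_filter_le_apply {f : ℕ → ℕ} (hf : Monotone f) {n : ℕ}
    (hfn : ∀ i, f i ≤ n) :
    ((Finset.Icc 0 n).filter (fun i => i = f i)).sup id
      = ((Finset.Icc 1 n).filter (fun i => i ≤ f i)).sup id := by
  apply le_antisymm
  · refine Finset.sup_le fun i hi => ?_
    obtain ⟨hin, hfix⟩ := Finset.mem_filter.mp hi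
    rcases Nat.eq_zero_or_pos i with rfl | hpos
    · exact Nat.zero_le _
    · exact Finset.le_sup (f := id) (Finset.mem_filter.mpr
        ⟨Finset.mem_Icc.mpr ⟨hpos, (Finset.mem_Icc.mp hin).2⟩, hfix.le⟩)
  · obtain h | hne := ((Finset.Icc 1 n).filter (fun i => i ≤ f i)).eq_empty_or_nonempty
    · simp [h]
    obtain ⟨r, hr, hsup⟩ := Finset.exists_mem_eq_sup _ hne id
    obtain ⟨hr1n, hrf⟩ := Finset.mem_filter.mp hr
    obtain ⟨hr1, hrn⟩ := Finset.mem_Icc.mp hr1n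
    have hfr_mem : f r ∈ (Finset.Icc 1 n).filter (fun i => i ≤ f i) :=
      Finset.mem_filter.mpr ⟨Finset.mem_Icc.mpr ⟨hr1.trans hrf, hfn r⟩, hf hrf⟩
    have hfr : f r ≤ r := (Finset.le_sup (f := id) hfr_mem).trans_eq hsup
    rw [hsup]
    exact Finset.le_sup (f := id)
      (Finset.mem_filter.mpr ⟨Finset.mem_Icc.mpr ⟨r.zero_le, hrn⟩, le_antisymm hrf hfr⟩)

theorem argmax_fixedPoint_eq_rBH_general
    (α : ℝ) (hα0 : 0 < α)
    (C : Multiset ℝ)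
    (m : ℕ) (hm : m = C.card) :
    ((Finset.Icc 0 m).filter
        (fun i : ℕ => i = countBelow C ((i : ℝ) * α / (m : ℝ)))).sup id
      = rBH α C := by
  subst hm
  have hmono : Monotone fun i : ℕ => countBelow C ((i : ℝ) * α / (C.card : ℝ)) :=
    (countBelow_mono C).comp fun i j hij => by gcongr
  rw [rBH_eq_sup_filter_le_countBelow,
    Nat.sup_filter_eq_apply_eq_sup_filter_le_apply hmono fun _ => countBelow_le_card C _]

/-- The two argmax characterizations of the BH procedure coincide:
`max {i ∈ {0,1,…,m} : i = #S(i·α/m)} = r_BH` (the left-hand maximum is well defined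
because `i = 0` always satisfies `0 = #S(0)`). -/
theorem argmax_fixedPoint_eq_rBH
    (α : ℝ) (hα0 : 0 < α) (hα1 : α < 1)
    (C : Multiset ℝ) (hC : ∀ p ∈ C, 0 ≤ p ∧ p ≤ 1)
    (m : ℕ) (hm : m = C.card) :
    ((Finset.Icc 0 m).filter
        (fun i : ℕ => i = countBelow C ((i : ℝ) * α / (m : ℝ)))).sup id
      = rBH α C :=
  argmax_fixedPoint_eq_rBH_general α hα0 C m hm
end

section
/- FastLSU terminates and is equivalent to the Benjamini–Hochberg linear step-up procedure: the sequence defined by r_0 = m and r_{k+1} = #S(r_k·α/m) satisfies r_k = r_{k+1} for some k ≤ m, and for every k at which r_k = r_{k+1} one has r_k = r_BH; consequently the set of p-values selected by FastLSU, {p ∈ C : p < r_k·α/m}, equals the BH rejection set {p ∈ C : p < r_BH·α/m}. -/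
/-! Write `f i = #S(i·α/m)`. Since `p_(i) < t` exactly when at least `i` p-values lie below `t`,
the BH index is the greatest post-fixed point `i ≤ f i` of `f`. The map `f` is monotone with
`f m ≤ m`, so FastLSU iterates it downward from the top: the sequence decreases, never drops below a
post-fixed point, and hence any fixed point it reaches is the greatest one. A strictly decreasing
run in `{0, …, m}` lasts at most `m` steps. -/

open scoped Classical

theorem List.SortedLE.lt_length_filter_lt_iff {α : Type*} [LinearOrder α] {l : List α}
    (hl : l.SortedLE) {n : ℕ} (hn : n < l.length) (t : α) :
    n < (l.filter (· < t)).length ↔ l[n] < t := by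
  constructor
  · intro h
    by_contra! hge
    have hdrop : (l.drop n).filter (· < t) = [] := by
      refine List.filter_eq_nil_iff.2 fun a ha => ?_
      obtain ⟨j, hj, rfl⟩ := List.mem_drop_iff_getElem.1 ha
      simpa using hge.trans (hl.getElem_le_getElem_of_le (Nat.le_add_right n j))
    have : (l.filter (· < t)).length ≤ n := by
      rw [← List.take_append_drop n l, List.filter_append, hdrop, List.append_nil]
      exact (List.length_filter_le _ _).trans (List.length_take_le _ _)
    omega
  · intro h
    have htake : (l.take (n + 1)).filter (· < t) = l.take (n + 1) := by
      refine List.filter_eq_self.2 fun a ha => ?_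
      obtain ⟨j, hj, rfl⟩ := List.mem_take_iff_getElem.1 ha
      simpa using (hl.getElem_le_getElem_of_le (by omega)).trans_lt h
    calc n < (l.take (n + 1)).length := by simp; omega
      _ ≤ (l.filter (· < t)).length := by
        rw [← htake]; exact ((List.take_sublist _ _).filter _).length_le

theorem countBelow_eq_length_filter_sort (C : Multiset ℝ) (t : ℝ) :
    countBelow C t = ((C.sort (· ≤ ·)).filter (· < t)).length := by
  conv_lhs => rw [countBelow, ← Multiset.sort_eq C (· ≤ ·), Multiset.filter_coe]
  rfl

theorem le_countBelow_iff_orderStat_lt {C : Multiset ℝ} {n : ℕ} (hn : 1 ≤ n) (hnC : n ≤ C.card)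
    (t : ℝ) : n ≤ countBelow C t ↔ orderStat C n < t := by
  obtain ⟨i, rfl⟩ : ∃ i, n = i + 1 := ⟨n - 1, by omega⟩
  have hi : i < (C.sort (· ≤ ·)).length := by simpa using hnC
  rw [countBelow_eq_length_filter_sort, orderStat, Nat.add_sub_cancel, List.getD_eq_getElem _ _ hi]
  exact (Multiset.pairwise_sort C _).sortedLE.lt_length_filter_lt_iff hi t

theorem isGreatest_rBH (α : ℝ) (C : Multiset ℝ) :
    IsGreatest {i : ℕ | i ≤ countBelow C (i * α / C.card)} (rBH α C) := by
  set S := (Finset.Icc 1 C.card).filter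
    (fun i => orderStat C i < (i : ℝ) * α / (C.card : ℝ)) with hS
  have hrBH : rBH α C = S.sup id := rfl
  have hmem : ∀ i, 1 ≤ i → (i ∈ S ↔ i ≤ countBelow C (i * α / C.card)) := by
    intro i hi
    simp only [hS, Finset.mem_filter, Finset.mem_Icc, hi, true_and]
    constructor
    · rintro ⟨hiC, hlt⟩
      exact (le_countBelow_iff_orderStat_lt hi hiC _).2 hlt
    · intro hle
      have hiC := hle.trans (countBelow_le_card C _)
      exact ⟨hiC, (le_countBelow_iff_orderStat_lt hi hiC _).1 hle⟩
  refine ⟨?_, fun i hi => ?_⟩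
  · rcases S.eq_empty_or_nonempty with hempty | hne
    · simp [hrBH, hempty]
    · obtain ⟨i, hiS, hsup⟩ := S.exists_mem_eq_sup hne id
      rw [Set.mem_ofPred_eq, hrBH, hsup]
      exact (hmem i (Finset.mem_Icc.1 (Finset.mem_filter.1 hiS).1).1).1 hiS
  · rcases Nat.eq_zero_or_pos i with rfl | hi1
    · exact Nat.zero_le _
    · exact Finset.le_sup (f := id) ((hmem i hi1).2 hi)

theorem Monotone.iterate_eq_of_isGreatest {β : Type*} [PartialOrder β] {f : β → β}
    (hf : Monotone f) {b x : β} (hb : IsGreatest {y | y ≤ f y} b) (hbx : b ≤ x) {k : ℕ}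
    (hk : f^[k] x = f^[k + 1] x) : f^[k] x = b := by
  rw [Function.iterate_succ_apply'] at hk
  refine le_antisymm (hb.2 hk.le) ?_
  calc b ≤ f^[k] b := hf.monotone_iterate_of_le_map hb.1 (Nat.zero_le k)
    _ ≤ f^[k] x := hf.iterate k hbx

theorem Antitone.exists_le_eq_succ {r : ℕ → ℕ} (hr : Antitone r) : ∃ k ≤ r 0, r k = r (k + 1) := by
  by_contra! hne
  have hbound : ∀ k ≤ r 0 + 1, r k + k ≤ r 0 := by
    intro k hk
    induction k with
    | zero => simp
    | succ k ih =>
      have hstep := lt_of_le_of_ne (hr (Nat.le_add_right k 1)) (hne k (by omega)).symm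
      have hprev := ih (by omega)
      omega
  have := hbound (r 0 + 1) le_rfl
  omega

theorem fastLSU_equiv_BH_general
    (α : ℝ) (hα0 : 0 < α)
    (C : Multiset ℝ)
    (m : ℕ) (hm : m = C.card)
    (r : ℕ → ℕ) (hr0 : r 0 = m)
    (hr : ∀ k, r (k + 1) = countBelow C ((r k : ℝ) * α / (m : ℝ))) :
    (∃ k ≤ m, r k = r (k + 1)) ∧
    ∀ k, r k = r (k + 1) →
      r k = rBH α C ∧
      C.filter (fun p => p < (r k : ℝ) * α / (m : ℝ))
        = C.filter (fun p => p < (rBH α C : ℝ) * α / (m : ℝ)) := by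
  subst hm
  set f : ℕ → ℕ := fun i => countBelow C (i * α / C.card)
  have hf : Monotone f := (countBelow_mono C).comp fun i j hij => by gcongr
  have hiter : r = fun k => f^[k] C.card := by
    funext k
    induction k with
    | zero => exact hr0
    | succ k ih => rw [hr, ih, Function.iterate_succ_apply']
  have hfix : ∀ k, r k = r (k + 1) → r k = rBH α C := by
    rw [hiter]
    exact fun k => hf.iterate_eq_of_isGreatest (isGreatest_rBH α C)
      ((isGreatest_rBH α C).1.trans (countBelow_le_card C _))
  have hanti : Antitone r := hiter ▸ hf.antitone_iterate_of_map_le (countBelow_le_card C _)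
  exact ⟨hr0 ▸ hanti.exists_le_eq_succ, fun k hk => ⟨hfix k hk, by rw [hfix k hk]⟩⟩

/-- FastLSU terminates and is equivalent to the BH linear step-up procedure:
the sequence `r 0 = m`, `r (k+1) = #S(r k · α/m)` satisfies `r k = r (k+1)` for some
`k ≤ m`; for every `k` at which `r k = r (k+1)` one has `r k = r_BH`; consequently the
set of p-values selected by FastLSU equals the BH rejection set. -/
theorem fastLSU_equiv_BH
    (α : ℝ) (hα0 : 0 < α) (hα1 : α < 1)
    (C : Multiset ℝ) (hC : ∀ p ∈ C, 0 ≤ p ∧ p ≤ 1)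
    (m : ℕ) (hm : m = C.card)
    (r : ℕ → ℕ) (hr0 : r 0 = m)
    (hr : ∀ k, r (k + 1) = countBelow C ((r k : ℝ) * α / (m : ℝ))) :
    (∃ k ≤ m, r k = r (k + 1)) ∧
    ∀ k, r k = r (k + 1) →
      r k = rBH α C ∧
      C.filter (fun p => p < (r k : ℝ) * α / (m : ℝ))
        = C.filter (fun p => p < (rBH α C : ℝ) * α / (m : ℝ)) :=
  fastLSU_equiv_BH_general α hα0 C m hm r hr0 hr
end

section
/- Two-stage screening preserves the BH result (basis of the dependence correction of Section 5.1): let 0 < α* ≤ α < 1, let R = r_BH(α), and let T = {p ∈ C : p < R·α/m} be the multiset of the p-values selected at level α (so |T| = R). Then applying the step-up search to T with thresholds relative to the full count m, i.e., max{i ∈ {1,…,R} : p_(i:T) < i·α*/m} (0 if none), equals r_BH(α*), and {p ∈ T : p < r_BH(α*)·α*/m} equals the BH rejection set of C at level α*. -/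
/-!
At level `α` the BH index `R` is self-consistent: exactly `R` p-values lie below `R·α/m`,
since an `(R+1)`-st one would make `R+1` pass the level-`α` test as well. Hence `T` consists
of the `R` smallest p-values and shares its first `R` order statistics with `C`. As `r_BH` is
monotone in the level, every index passing at level `α*` is at most `R`, so the step-up
search on `T` sees the same passing indices as on `C`; and the level-`α*` threshold lies below
`R·α/m`, so screening by `T` removes none of the level-`α*` rejections.
-/

open scoped Classical

theorem List.Pairwise.filter_lt_eq_take {α : Type*} [LinearOrder α] {L : List α}
    (hL : L.Pairwise (· ≤ ·)) (t : α) :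
    L.filter (· < t) = L.take (L.countP (· < t)) := by
  induction L with
  | nil => simp
  | cons a L ih =>
    by_cases ha : a < t
    · simp [ha, ih hL.of_cons]
    · have hge : ∀ x ∈ a :: L, ¬ x < t := fun x hx => by
        rcases List.mem_cons.1 hx with rfl | hx
        exacts [ha, fun hx' => ha ((List.rel_of_pairwise_cons hL hx).trans_lt hx')]
      rw [List.filter_eq_nil_iff.2 (by simpa using hge), List.countP_eq_zero.2 (by simpa using hge),
        List.take_zero]

theorem countBelow_eq_countP_sort (C : Multiset ℝ) (t : ℝ) :
    countBelow C t = (C.sort (· ≤ ·)).countP (· < t) := by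
  rw [countBelow, List.countP_eq_length_filter, ← Multiset.coe_card, ← Multiset.filter_coe,
    Multiset.sort_eq]

theorem sort_filter_lt_eq_take (C : Multiset ℝ) (t : ℝ) :
    (C.filter (· < t)).sort (· ≤ ·) = (C.sort (· ≤ ·)).take (countBelow C t) := by
  rw [countBelow_eq_countP_sort, ← (Multiset.pairwise_sort C _).filter_lt_eq_take]
  refine List.Perm.eq_of_pairwise' (Multiset.pairwise_sort _ _)
    ((Multiset.pairwise_sort C _).filter _) ?_
  rw [← Multiset.coe_eq_coe, Multiset.sort_eq, ← Multiset.filter_coe, Multiset.sort_eq]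

theorem orderStat_filter_lt {C : Multiset ℝ} {t : ℝ} {i : ℕ} (hi : 1 ≤ i)
    (hit : i ≤ countBelow C t) : orderStat (C.filter (· < t)) i = orderStat C i := by
  have hlen : countBelow C t ≤ (C.sort (· ≤ ·)).length := by
    rw [Multiset.length_sort]; exact countBelow_le_card C t
  rw [orderStat, orderStat, sort_filter_lt_eq_take,
    List.getD_eq_getElem _ _ (by rw [List.length_take]; omega),
    List.getD_eq_getElem _ _ (by omega), List.getElem_take]

theorem orderStat_lt_iff {C : Multiset ℝ} {t : ℝ} {k : ℕ} (hk : 1 ≤ k)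
    (hkC : k ≤ C.card) :
    orderStat C k < t ↔ k ≤ countBelow C t := by
  rw [countBelow_eq_countP_sort, orderStat]
  set L := C.sort (· ≤ ·)
  have hL : L.Pairwise (· ≤ ·) := Multiset.pairwise_sort _ _
  have hkL : k - 1 < L.length := by rw [Multiset.length_sort]; omega
  rw [List.getD_eq_getElem _ _ hkL]
  constructor
  · intro h
    have hprefix : ∀ x ∈ L.take k, x < t := by
      intro x hx
      obtain ⟨j, hj, rfl⟩ := List.mem_take_iff_getElem.1 hx
      exact (hL.rel_get_of_le (a := ⟨j, by omega⟩) (b := ⟨k - 1, hkL⟩)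
        (Fin.mk_le_mk.2 (by omega))).trans_lt h
    calc k = (L.take k).countP (· < t) := by
          rw [List.countP_eq_length.2 (by simpa using hprefix), List.length_take]; omega
      _ ≤ L.countP (· < t) := (List.take_sublist k L).countP_le
  · intro h
    have hmem : L[k - 1] ∈ L.filter (· < t) := by
      rw [hL.filter_lt_eq_take, List.mem_take_iff_getElem]
      exact ⟨k - 1, by omega, rfl⟩
    simpa using (List.mem_filter.1 hmem).2

theorem Multiset.filter_lt_filter_lt_of_le {α : Type*} [Preorder α] [DecidableLT α]
    (s : Multiset α) {a b : α} (hab : a ≤ b) :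
    (s.filter (· < b)).filter (· < a) = s.filter (· < a) := by
  rw [Multiset.filter_filter]
  exact Multiset.filter_congr fun x _ => and_iff_left_of_imp fun hx => hx.trans_le hab

theorem le_rBH {α : ℝ} {C : Multiset ℝ} {i : ℕ} (hi : 1 ≤ i) (hiC : i ≤ C.card)
    (h : orderStat C i < i * α / C.card) : i ≤ rBH α C :=
  Finset.le_sup (f := id) (Finset.mem_filter.2 ⟨Finset.mem_Icc.2 ⟨hi, hiC⟩, h⟩)

theorem rBH_mem_of_ne_zero {α : ℝ} {C : Multiset ℝ} (h : rBH α C ≠ 0) :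
    rBH α C ∈ (Finset.Icc 1 C.card).filter (fun i => orderStat C i < i * α / C.card) := by
  unfold rBH at h ⊢
  set S := (Finset.Icc 1 C.card).filter fun i => orderStat C i < i * α / C.card
  obtain ⟨i, hi, hsup⟩ :=
    S.exists_mem_eq_sup (S.nonempty_iff_ne_empty.2 fun he => h (by rw [he]; rfl)) id
  rwa [hsup]

theorem rBH_mono (C : Multiset ℝ) {α β : ℝ} (hαβ : α ≤ β) : rBH α C ≤ rBH β C :=
  Finset.sup_mono <| Finset.monotone_filter_right _ fun i _ hi => hi.trans_le (by gcongr)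

theorem countBelow_rBH {α : ℝ} {C : Multiset ℝ} (hα : 0 ≤ α) (hC : ∀ p ∈ C, 0 ≤ p) :
    countBelow C (rBH α C * α / C.card) = rBH α C := by
  set R := rBH α C
  obtain hR0 | hR0 := eq_or_ne R 0
  · rw [hR0, Nat.cast_zero, zero_mul, zero_div, countBelow, Multiset.card_eq_zero,
      Multiset.filter_eq_nil]
    exact fun p hp => (hC p hp).not_gt
  obtain ⟨⟨hR1, hRC⟩, hRlt⟩ := by simpa using rBH_mem_of_ne_zero hR0
  refine le_antisymm ?_ ((orderStat_lt_iff hR1 hRC).1 hRlt)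
  by_contra! hlt
  have hR1C : R + 1 ≤ C.card := Nat.le_trans hlt (countBelow_le_card _ _)
  have hnext : orderStat C (R + 1) < (R + 1 : ℕ) * α / C.card :=
    ((orderStat_lt_iff (by omega) hR1C).2 hlt).trans_le (by gcongr; simp)
  exact (le_rBH (by omega) hR1C hnext).not_gt (Nat.lt_succ_self R)

theorem sup_filter_orderStat_filter_lt_eq_rBH {C : Multiset ℝ} {t β : ℝ} {R : ℕ}
    (hR : R ≤ countBelow C t) (hβ : rBH β C ≤ R) :
    ((Finset.Icc 1 R).filter
      (fun i => orderStat (C.filter (· < t)) i < i * β / C.card)).sup id = rBH β C := by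
  rw [rBH]
  congr 1
  ext i
  simp only [Finset.mem_filter, Finset.mem_Icc]
  constructor
  · rintro ⟨⟨hi, hiR⟩, hlt⟩
    rw [orderStat_filter_lt hi (hiR.trans hR)] at hlt
    exact ⟨⟨hi, hiR.trans (hR.trans (countBelow_le_card C t))⟩, hlt⟩
  · rintro ⟨⟨hi, hiC⟩, hlt⟩
    have hiR := (le_rBH hi hiC hlt).trans hβ
    rw [orderStat_filter_lt hi (hiR.trans hR)]
    exact ⟨⟨hi, hiR⟩, hlt⟩

theorem two_stage_screening_preserves_BH_general
    (C : Multiset ℝ) (m : ℕ) (hm : m = C.card)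
    (hC : ∀ p ∈ C, 0 ≤ p ∧ p ≤ 1)
    (α αs : ℝ) (h0 : 0 < αs) (h1 : αs ≤ α)
    (R : ℕ) (hR : R = rBH α C)
    (T : Multiset ℝ) (hT : T = C.filter (fun p => p < (R : ℝ) * α / (m : ℝ))) :
    T.card = R ∧
    ((Finset.Icc 1 R).filter
        (fun i => orderStat T i < (i : ℝ) * αs / (m : ℝ))).sup id = rBH αs C ∧
    T.filter (fun p => p < (rBH αs C : ℝ) * αs / (m : ℝ))
      = C.filter (fun p => p < (rBH αs C : ℝ) * αs / (m : ℝ)) := by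
  subst hm hR hT
  have hcount : countBelow C (rBH α C * α / C.card) = rBH α C :=
    countBelow_rBH (h0.le.trans h1) fun p hp => (hC p hp).1
  have hmono : rBH αs C ≤ rBH α C := rBH_mono C h1
  refine ⟨hcount, sup_filter_orderStat_filter_lt_eq_rBH hcount.ge hmono,
    C.filter_lt_filter_lt_of_le ?_⟩
  gcongr

/-- Two-stage screening preserves the BH result (basis of the dependence
correction of Section 5.1): with `0 < α* ≤ α < 1`, `R = r_BH(α)` and
`T = {p ∈ C : p < R·α/m}` the multiset of p-values selected at level `α` (so `|T| = R`),
the step-up search on `T` with thresholds relative to the full count `m` equals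
`r_BH(α*)`, and `{p ∈ T : p < r_BH(α*)·α*/m}` equals the BH rejection set of `C` at
level `α*`. -/
theorem two_stage_screening_preserves_BH
    (C : Multiset ℝ) (m : ℕ) (hm : m = C.card)
    (hC : ∀ p ∈ C, 0 ≤ p ∧ p ≤ 1)
    (α αs : ℝ) (h0 : 0 < αs) (h1 : αs ≤ α) (h2 : α < 1)
    (R : ℕ) (hR : R = rBH α C)
    (T : Multiset ℝ) (hT : T = C.filter (fun p => p < (R : ℝ) * α / (m : ℝ))) :
    T.card = R ∧
    ((Finset.Icc 1 R).filter
        (fun i => orderStat T i < (i : ℝ) * αs / (m : ℝ))).sup id = rBH αs C ∧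
    T.filter (fun p => p < (rBH αs C : ℝ) * αs / (m : ℝ))
      = C.filter (fun p => p < (rBH αs C : ℝ) * αs / (m : ℝ)) :=
  two_stage_screening_preserves_BH_general C m hm hC α αs h0 h1 R hR T hT
end

section
/- Q-values of selected tests are computable from the selected subset alone (Section 5.2): define the q-value q_(i) = min{p_(j)·m/j : i ≤ j ≤ m} for 1 ≤ i ≤ m, and let R = r_BH be the BH index at level α. Then for every i with 1 ≤ i ≤ R one has q_(i) = min{p_(j)·m/j : i ≤ j ≤ R} and q_(i) < α, while for every i with R < i ≤ m one has q_(i) ≥ α. -/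
/-!
By maximality of `R = r_BH`, every ratio `p_(j)·m/j` with `R < j ≤ m` is at least `α`, while the
ratio at `j = R` is below `α`. Hence for `i ≤ R` the minimum over `[i, m]` is attained in `[i, R]`
and is below `α`, and for `i > R` every ratio in the minimum is at least `α`.
-/

open scoped Classical

/-- The q-value (BH-adjusted p-value) of the `i`-th order statistic of `C` in a testing
problem of `m` p-values: `q_(i) = min {p_(j)·m/j : i ≤ j ≤ m}`. -/
noncomputable def qval (m : ℕ) (C : Multiset ℝ) (i : ℕ) : ℝ :=
  sInf ((fun j : ℕ => orderStat C j * (m : ℝ) / (j : ℝ)) '' Set.Icc i m)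

/-- `qval m C i` is, definitionally, the infimum of `bhRatio C m` over `[i, m]`. -/
noncomputable def bhRatio (C : Multiset ℝ) (m j : ℕ) : ℝ :=
  orderStat C j * m / j

lemma bhRatio_lt_iff {C : Multiset ℝ} {m j : ℕ} {α : ℝ} (hj : 0 < j) (hm : 0 < m) :
    bhRatio C m j < α ↔ orderStat C j < j * α / m := by
  rw [bhRatio, div_lt_iff₀ (by positivity), lt_div_iff₀ (by positivity), mul_comm α]

lemma le_rBH_s14 {α : ℝ} {C : Multiset ℝ} {j : ℕ} (hj : 1 ≤ j) (hjm : j ≤ C.card)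
    (hlt : orderStat C j < j * α / C.card) : j ≤ rBH α C :=
  Finset.le_sup (f := id) (Finset.mem_filter.mpr ⟨Finset.mem_Icc.mpr ⟨hj, hjm⟩, hlt⟩)

lemma rBH_spec {α : ℝ} {C : Multiset ℝ} (h : 0 < rBH α C) :
    rBH α C ≤ C.card ∧ orderStat C (rBH α C) < rBH α C * α / C.card := by
  have hne : ((Finset.Icc 1 C.card).filter
      (fun i => orderStat C i < (i : ℝ) * α / (C.card : ℝ))).Nonempty := by
    by_contra hempty
    rw [Finset.not_nonempty_iff_eq_empty] at hempty
    simp [rBH, hempty] at h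
  obtain ⟨r, hr, hsup⟩ := Finset.exists_mem_eq_sup _ hne id
  obtain ⟨hr_Icc, hr_lt⟩ := Finset.mem_filter.mp hr
  rw [rBH, hsup]
  exact ⟨(Finset.mem_Icc.mp hr_Icc).2, hr_lt⟩

lemma bhRatio_rBH_lt {α : ℝ} {C : Multiset ℝ} (h : 0 < rBH α C) :
    rBH α C ≤ C.card ∧ bhRatio C C.card (rBH α C) < α := by
  obtain ⟨hle, hlt⟩ := rBH_spec h
  exact ⟨hle, (bhRatio_lt_iff h (h.trans_le hle)).mpr hlt⟩

lemma le_bhRatio_of_rBH_lt {α : ℝ} {C : Multiset ℝ} {j : ℕ} (hj : rBH α C < j)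
    (hjm : j ≤ C.card) : α ≤ bhRatio C C.card j := by
  by_contra! hlt
  have hj0 : 0 < j := (Nat.zero_le _).trans_lt hj
  exact hj.not_ge (le_rBH_s14 hj0 hjm ((bhRatio_lt_iff hj0 (hj0.trans_le hjm)).mp hlt))

lemma csInf_image_Icc_eq_of_lt_of_le {β : Type*} [ConditionallyCompleteLinearOrder β]
    {f : ℕ → β} {i k n : ℕ} {a : β} (hik : i ≤ k) (hkn : k ≤ n) (hk : f k < a)
    (htail : ∀ j, k < j → j ≤ n → a ≤ f j) :
    sInf (f '' Set.Icc i n) = sInf (f '' Set.Icc i k) := by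
  have hbdd : ∀ l, BddBelow (f '' Set.Icc i l) := fun l => ((Set.finite_Icc i l).image f).bddBelow
  have hk_mem : f k ∈ f '' Set.Icc i k := ⟨k, ⟨hik, le_rfl⟩, rfl⟩
  refine le_antisymm (csInf_le_csInf (hbdd n) ⟨_, hk_mem⟩ (Set.image_mono
    (Set.Icc_subset_Icc_right hkn))) (le_csInf ⟨f k, k, ⟨hik, hkn⟩, rfl⟩ ?_)
  rintro _ ⟨j, ⟨hij, hjn⟩, rfl⟩
  rcases le_or_gt j k with hjk | hkj
  · exact csInf_le (hbdd k) ⟨j, ⟨hij, hjk⟩, rfl⟩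
  · exact ((csInf_le (hbdd k) hk_mem).trans_lt hk).le.trans (htail j hkj hjn)

theorem qvalues_from_selected_subset_general
    (α : ℝ)
    (C : Multiset ℝ) (m : ℕ) (hm : m = C.card)
    (R : ℕ) (hR : R = rBH α C) :
    (∀ i, 1 ≤ i → i ≤ R →
        qval m C i
          = sInf ((fun j : ℕ => orderStat C j * (m : ℝ) / (j : ℝ)) '' Set.Icc i R) ∧
        qval m C i < α) ∧
    (∀ i, R < i → i ≤ m → α ≤ qval m C i) := by
  subst hm hR
  have htail : ∀ j, rBH α C < j → j ≤ C.card → α ≤ bhRatio C C.card j :=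
    fun j => le_bhRatio_of_rBH_lt
  refine ⟨fun i hi hiR => ?_, fun i hRi him => ?_⟩
  · obtain ⟨hRm, hR_lt⟩ := bhRatio_rBH_lt (hi.trans hiR)
    have heq : qval C.card C i = sInf (bhRatio C C.card '' Set.Icc i (rBH α C)) :=
      csInf_image_Icc_eq_of_lt_of_le hiR hRm hR_lt htail
    refine ⟨heq, heq ▸ (csInf_le ((Set.finite_Icc _ _).image _).bddBelow ?_).trans_lt hR_lt⟩
    exact ⟨rBH α C, ⟨hiR, le_rfl⟩, rfl⟩
  · exact le_csInf ⟨_, i, ⟨le_rfl, him⟩, rfl⟩ fun _ ⟨j, ⟨hij, hjm⟩, hj⟩ =>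
      hj ▸ htail j (hRi.trans_le hij) hjm

/-- Q-values of selected tests are computable from the selected subset alone
(Section 5.2): with `R = r_BH`, for every `1 ≤ i ≤ R` one has
`q_(i) = min {p_(j)·m/j : i ≤ j ≤ R}` and `q_(i) < α`, while for every `R < i ≤ m` one
has `q_(i) ≥ α`. -/
theorem qvalues_from_selected_subset
    (α : ℝ) (hα0 : 0 < α) (hα1 : α < 1)
    (C : Multiset ℝ) (m : ℕ) (hm : m = C.card)
    (hC : ∀ p ∈ C, 0 ≤ p ∧ p ≤ 1)
    (R : ℕ) (hR : R = rBH α C) :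
    (∀ i, 1 ≤ i → i ≤ R →
        qval m C i
          = sInf ((fun j : ℕ => orderStat C j * (m : ℝ) / (j : ℝ)) '' Set.Icc i R) ∧
        qval m C i < α) ∧
    (∀ i, R < i → i ≤ m → α ≤ qval m C i) :=
  qvalues_from_selected_subset_general α C m hm R hR
end

section
/- Expected number of BH discoveries is bounded by α·m_0 + m_1 (Section 5): on a probability space, let P_1,…,P_m be random variables with values in [0,1], let N ⊆ {1,…,m} be a set of m_0 indices (the true nulls) such that ℙ(P_i < α) ≤ α for every i ∈ N, and set m_1 = m − m_0. Let R be the random BH index at level α computed from P_1,…,P_m, i.e., R(ω) = max{i ∈ {1,…,m} : P_(i)(ω) < i·α/m} (0 if none), where P_(1)(ω) ≤ ⋯ ≤ P_(m)(ω) are the sorted values. Then E[R] ≤ α·m_0 + m_1. -/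
open scoped Classical

/-!
If the BH index is `k ≥ 1`, then `p_(k) < kα/m ≤ α`, so at least `k` of the p-values lie below
`α`. Hence `R` is bounded pointwise by the number of nulls with `P i < α` plus the number `m₁`
of non-nulls, whose expectation is `∑_{i ∈ N} ℙ(P i < α) + m₁`.
-/

open Finset MeasureTheory

lemma le_countBelow_of_orderStat_lt {C : Multiset ℝ} {k : ℕ} {t : ℝ}
    (hk : 1 ≤ k) (hkC : k ≤ C.card) (h : orderStat C k < t) :
    k ≤ countBelow C t := by
  set l := C.sort (· ≤ ·)
  have hlen : l.length = C.card := C.length_sort _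
  have hkl : k - 1 < l.length := by omega
  have htake : ∀ x ∈ l.take k, x < t := by
    intro x hx
    obtain ⟨i, hi, rfl⟩ := List.mem_take_iff_getElem.1 hx
    have hle : l[i] ≤ l[k - 1] :=
      (C.pairwise_sort _).rel_get_of_le (a := ⟨i, hi.trans_le (min_le_right _ _)⟩)
        (b := ⟨k - 1, hkl⟩) (by simp only [Fin.mk_le_mk]; omega)
    rw [orderStat, List.getD_eq_getElem _ _ hkl] at h
    exact hle.trans_lt h
  have hcount : countBelow C t = l.countP (fun p => decide (p < t)) := by
    rw [countBelow, ← Multiset.countP_eq_card_filter, ← C.sort_eq (· ≤ ·)]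
    rfl
  calc k = (l.take k).countP (fun p => decide (p < t)) := by
        rw [List.countP_eq_length.2 (by simpa using htake), List.length_take]; omega
    _ ≤ l.countP (fun p => decide (p < t)) := (l.take_sublist k).countP_le
    _ = countBelow C t := hcount.symm

lemma rBH_le_countBelow {α : ℝ} (hα : 0 ≤ α) (C : Multiset ℝ) :
    rBH α C ≤ countBelow C α := by
  refine Finset.sup_le fun k hk => ?_
  obtain ⟨hkIcc, hkC⟩ := Finset.mem_filter.1 hk
  obtain ⟨hk1, hkC'⟩ := Finset.mem_Icc.1 hkIcc
  refine le_countBelow_of_orderStat_lt hk1 hkC' (hkC.trans_le ?_)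
  have hC : (0 : ℝ) < C.card := by exact_mod_cast hk1.trans hkC'
  rw [div_le_iff₀ hC, mul_comm α]
  exact mul_le_mul_of_nonneg_right (Nat.cast_le.2 hkC') hα

lemma countBelow_map_univ {ι : Type*} [Fintype ι] (f : ι → ℝ) (t : ℝ) :
    countBelow (univ.val.map f) t = #{i | f i < t} := by
  rw [countBelow, Multiset.filter_map, Multiset.card_map]
  rfl

lemma natCast_card_filter_mem_eq_sum_indicator {Ω ι : Type*} [Fintype ι] (s : ι → Set Ω)
    (ω : Ω) : (#{i | ω ∈ s i} : ℝ) = ∑ i, (s i).indicator 1 ω := by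
  simp only [natCast_card_filter, Set.indicator_apply, Pi.one_apply]

section

variable {Ω ι : Type*} [MeasurableSpace Ω] [Fintype ι] {μ : Measure Ω} {s : ι → Set Ω}

lemma integrable_card_filter_mem [IsFiniteMeasure μ] (hs : ∀ i, MeasurableSet (s i)) :
    Integrable (fun ω => (#{i | ω ∈ s i} : ℝ)) μ := by
  simp_rw [natCast_card_filter_mem_eq_sum_indicator]
  exact integrable_finsetSum _ fun i _ => (integrable_const 1).indicator (hs i)

lemma integral_card_filter_mem [IsFiniteMeasure μ] (hs : ∀ i, MeasurableSet (s i)) :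
    ∫ ω, (#{i | ω ∈ s i} : ℝ) ∂μ = ∑ i, μ.real (s i) := by
  simp_rw [natCast_card_filter_mem_eq_sum_indicator]
  rw [integral_finsetSum _ fun i _ => (integrable_const 1).indicator (hs i)]
  exact sum_congr rfl fun i _ => integral_indicator_one (hs i)

end

open MeasureTheory in
theorem expected_BH_discoveries_le_general
    {Ω : Type*} [MeasurableSpace Ω] (μ : Measure Ω) [IsProbabilityMeasure μ]
    (α : ℝ) (hα0 : 0 < α)
    (m : ℕ)
    (P : Fin m → Ω → ℝ) (hmeas : ∀ i, Measurable (P i))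
    (N : Finset (Fin m)) (m0 : ℕ) (hm0 : m0 = N.card)
    (hnull : ∀ i ∈ N, μ {ω | P i ω < α} ≤ ENNReal.ofReal α)
    (m1 : ℕ) (hm1 : m1 = m - m0)
    (R : Ω → ℕ)
    (hRdef : ∀ ω, R ω = rBH α (Multiset.map (fun i => P i ω) Finset.univ.val)) :
    ∫ ω, (R ω : ℝ) ∂μ ≤ α * (m0 : ℝ) + (m1 : ℝ) := by
  have hs : ∀ i, MeasurableSet {ω | P i ω < α} := fun i =>
    measurableSet_lt (hmeas i) measurable_const
  have hR : ∀ ω, (R ω : ℝ) ≤ #{i | P i ω < α} := fun ω => by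
    rw [hRdef, ← countBelow_map_univ]
    exact_mod_cast rBH_le_countBelow hα0.le _
  calc ∫ ω, (R ω : ℝ) ∂μ
      ≤ ∫ ω, (#{i | ω ∈ {ω | P i ω < α}} : ℝ) ∂μ :=
        integral_mono_of_nonneg (ae_of_all _ fun _ => by positivity)
          (integrable_card_filter_mem hs) (ae_of_all _ hR)
    _ = ∑ i ∈ N, μ.real {ω | P i ω < α} + ∑ i ∈ Nᶜ, μ.real {ω | P i ω < α} := by
        rw [integral_card_filter_mem hs, sum_add_sum_compl]
    _ ≤ ∑ _i ∈ N, α + ∑ _i ∈ Nᶜ, 1 :=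
        add_le_add (sum_le_sum fun i hi => ENNReal.toReal_le_of_le_ofReal hα0.le (hnull i hi))
          (sum_le_sum fun _ _ => measureReal_le_one)
    _ = α * m0 + m1 := by simp [hm0, hm1, card_compl, mul_comm]

open MeasureTheory in
/-- Expected number of BH discoveries is bounded by `α·m₀ + m₁` (Section 5):
on a probability space, let `P 1, …, P m` be random variables with values in `[0,1]`, let
`N` be a set of `m₀` indices (the true nulls) with `ℙ(P i < α) ≤ α` for every `i ∈ N`,
and `m₁ = m − m₀`. If `R ω` is the BH index at level `α` computed from the values
`P 1 ω, …, P m ω`, then `E[R] ≤ α·m₀ + m₁`. -/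
theorem expected_BH_discoveries_le
    {Ω : Type*} [MeasurableSpace Ω] (μ : Measure Ω) [IsProbabilityMeasure μ]
    (α : ℝ) (hα0 : 0 < α) (hα1 : α < 1)
    (m : ℕ) (hm : 1 ≤ m)
    (P : Fin m → Ω → ℝ) (hmeas : ∀ i, Measurable (P i))
    (hrange : ∀ i ω, 0 ≤ P i ω ∧ P i ω ≤ 1)
    (N : Finset (Fin m)) (m0 : ℕ) (hm0 : m0 = N.card)
    (hnull : ∀ i ∈ N, μ {ω | P i ω < α} ≤ ENNReal.ofReal α)
    (m1 : ℕ) (hm1 : m1 = m - m0)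
    (R : Ω → ℕ)
    (hRdef : ∀ ω, R ω = rBH α (Multiset.map (fun i => P i ω) Finset.univ.val)) :
    ∫ ω, (R ω : ℝ) ∂μ ≤ α * (m0 : ℝ) + (m1 : ℝ) :=
  expected_BH_discoveries_le_general μ α hα0 m P hmeas N m0 hm0 hnull m1 hm1 R hRdef
end
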